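/- Let λ > 0, n ≥ 1, and set t_c = λ^{-n}(1+1/n)^{-n}. Then ∫₀^∞ exp(t - λ t^{1+1/n}) dt ≤ 4^n t_c exp(h(t_c)) + 1, where h(t) = t - λ t^{1+1/n}. -/

import Mathlib

open MeasureTheory

/-- For `λ > 0`, `n ≥ 1` and `t_c = λ^{-n}(1+1/n)^{-n}`, one has
`∫₀^∞ exp(t - λ t^{1+1/n}) dt ≤ 4^n t_c exp(h(t_c)) + 1` where `h(t) = t - λ t^{1+1/n}`. -/
theorem stmt1 (lam : ℝ) (hlam : 0 < lam) (n : ℕ) (hn : 1 ≤ n)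
    (tc : ℝ) (htc : tc = lam ^ (-(n : ℝ)) * (1 + 1 / (n : ℝ)) ^ (-(n : ℝ))) :
    ∫ t in Set.Ioi (0 : ℝ), Real.exp (t - lam * t ^ ((n + 1 : ℝ) / n)) ≤
      4 ^ n * tc * Real.exp (tc - lam * tc ^ ((n + 1 : ℝ) / n)) + 1 := by
  have hnr : (1:ℝ) ≤ (n:ℝ) := by exact_mod_cast hn
  have hn0 : (0:ℝ) < (n:ℝ) := by linarith
  set p : ℝ := 1 + 1/(n:ℝ) with hpdef
  have hinvn : 0 < 1/(n:ℝ) := by positivity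
  have hinvn1 : 1/(n:ℝ) ≤ 1 := by rw [div_le_one hn0]; exact hnr
  have hp1 : 1 < p := by rw [hpdef]; linarith
  have hp2 : p ≤ 2 := by rw [hpdef]; linarith
  have hpe : ((n:ℝ) + 1)/(n:ℝ) = p := by rw [hpdef]; field_simp
  have hlp : 0 < lam * p := by positivity
  have htc_eq : tc = (lam * p) ^ (-(n:ℝ)) := by
    rw [htc, ← Real.mul_rpow hlam.le (by positivity : (0:ℝ) ≤ 1 + 1/(n:ℝ))]
  have htcpos : 0 < tc := by rw [htc_eq]; positivity
  have hroot : tc ^ (1/(n:ℝ)) = (lam * p)⁻¹ := by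
    rw [htc_eq, ← Real.rpow_mul hlp.le]
    have h1 : -(n:ℝ) * (1/(n:ℝ)) = -1 := by field_simp
    rw [h1, Real.rpow_neg_one]
  -- splitting the rpow
  have hsplit : ∀ t : ℝ, 0 ≤ t → t ^ (((n:ℝ) + 1)/(n:ℝ)) = t * t ^ (1/(n:ℝ)) := by
    intro t ht
    rw [hpe, hpdef, Real.rpow_add' ht (by positivity), Real.rpow_one]
  -- value at tc
  have hhtc : tc - lam * tc ^ (((n:ℝ) + 1)/(n:ℝ)) = tc / ((n:ℝ) + 1) := by
    rw [hsplit tc htcpos.le, hroot, hpdef]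
    field_simp
    ring
  -- global max inequality
  have hmax : ∀ t : ℝ, 0 ≤ t → t - lam * t ^ (((n:ℝ) + 1)/(n:ℝ)) ≤ tc / ((n:ℝ) + 1) := by
    intro t ht
    rw [hsplit t ht]
    have hrt : 0 ≤ t ^ (1/(n:ℝ)) := Real.rpow_nonneg ht _
    set u : ℝ := 1 - lam * t ^ (1/(n:ℝ)) with hudef
    have hform : t - lam * (t * t ^ (1/(n:ℝ))) = t * u := by rw [hudef]; ring
    rw [hform]
    rcases le_or_gt u 0 with hu | hu
    · have h1 : t * u ≤ 0 := mul_nonpos_of_nonneg_of_nonpos ht hu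
      have h2 : 0 ≤ tc / ((n:ℝ) + 1) := by positivity
      exact le_trans h1 h2
    · -- AM-GM
      have hA : 0 ≤ lam * p * t ^ (1/(n:ℝ)) := by positivity
      have hB : 0 ≤ ((n:ℝ) + 1) * u := by positivity
      have hw1 : 0 ≤ (n:ℝ)/((n:ℝ)+1) := by positivity
      have hw2 : 0 ≤ 1/((n:ℝ)+1) := by positivity
      have hws : (n:ℝ)/((n:ℝ)+1) + 1/((n:ℝ)+1) = 1 := by field_simp
      have hg := Real.geom_mean_le_arith_mean2_weighted hw1 hw2 hA hB hws
      have hrhs : (n:ℝ)/((n:ℝ)+1) * (lam * p * t ^ (1/(n:ℝ))) +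
          1/((n:ℝ)+1) * (((n:ℝ)+1) * u) = 1 := by
        rw [hudef, hpdef]
        field_simp
        ring
      rw [hrhs] at hg
      -- raise to the (n+1) power
      have hXnn : 0 ≤ (lam * p * t ^ (1/(n:ℝ))) ^ ((n:ℝ)/((n:ℝ)+1)) *
          (((n:ℝ)+1) * u) ^ ((1:ℝ)/((n:ℝ)+1)) := by positivity
      have hpow := pow_le_one₀ hXnn hg (n := n + 1)
      have hone : (1:ℝ) ^ (n+1) = 1 := one_pow _
      rw [mul_pow] at hpow
      have e1 : ((lam * p * t ^ (1/(n:ℝ))) ^ ((n:ℝ)/((n:ℝ)+1))) ^ (n+1) =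
          (lam * p) ^ ((n:ℝ)) * t := by
        rw [← Real.rpow_natCast (((lam * p * t ^ (1/(n:ℝ))) ^ ((n:ℝ)/((n:ℝ)+1)))) (n+1),
          ← Real.rpow_mul hA]
        have : (n:ℝ)/((n:ℝ)+1) * ((n:ℕ)+1 : ℕ) = (n:ℝ) := by
          push_cast
          field_simp
        rw [this, Real.mul_rpow hlp.le hrt, ← Real.rpow_mul ht]
        have h2 : 1/(n:ℝ) * (n:ℝ) = 1 := by field_simp
        rw [h2, Real.rpow_one]
      have e2 : ((((n:ℝ)+1) * u) ^ ((1:ℝ)/((n:ℝ)+1))) ^ (n+1) = ((n:ℝ)+1) * u := by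
        rw [← Real.rpow_natCast (((((n:ℝ)+1) * u)) ^ ((1:ℝ)/((n:ℝ)+1))) (n+1),
          ← Real.rpow_mul hB]
        have : (1:ℝ)/((n:ℝ)+1) * ((n:ℕ)+1 : ℕ) = 1 := by
          push_cast
          field_simp
        rw [this, Real.rpow_one]
      rw [e1, e2] at hpow
      -- now (lam*p)^n * t * ((n+1)*u) ≤ 1, and (lam*p)^n * tc = 1
      set K : ℝ := (lam * p) ^ ((n:ℝ)) with hKdef
      have hK : 0 < K := by rw [hKdef]; positivity
      have hKtc : K * tc = 1 := by
        rw [hKdef, htc_eq, ← Real.rpow_add hlp]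
        simp
      have hn1 : (0:ℝ) < (n:ℝ) + 1 := by linarith
      rw [le_div_iff₀ hn1, ← mul_le_mul_iff_of_pos_left hK, hKtc]
      calc K * (t * u * ((n:ℝ)+1)) = K * t * (((n:ℝ)+1) * u) := by ring
        _ ≤ 1 := hpow
  -- tail inequality
  have htail : ∀ t : ℝ, 4 ^ n * tc ≤ t → t - lam * t ^ (((n:ℝ) + 1)/(n:ℝ)) ≤ -t := by
    intro t h4
    have hTpos : (0:ℝ) < 4 ^ n * tc := by positivity
    have ht : 0 ≤ t := le_trans hTpos.le h4
    rw [hsplit t ht]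
    have key : 2 ≤ lam * t ^ (1/(n:ℝ)) := by
      have hmono := Real.rpow_le_rpow hTpos.le h4 (le_of_lt hinvn)
      have e3 : ((4:ℝ) ^ n * tc) ^ (1/(n:ℝ)) = 4 * (lam * p)⁻¹ := by
        rw [Real.mul_rpow (by positivity) htcpos.le, hroot,
          ← Real.rpow_natCast (4:ℝ) n, ← Real.rpow_mul (by norm_num : (0:ℝ) ≤ 4)]
        have : (n:ℝ) * (1/(n:ℝ)) = 1 := by field_simp
        rw [this, Real.rpow_one]
      rw [e3] at hmono
      have h42 : 2 ≤ lam * (4 * (lam * p)⁻¹) := by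
        rw [mul_comm lam p] at *
        have : lam * (4 * (p * lam)⁻¹) = 4 / p := by field_simp
        rw [this]
        rw [le_div_iff₀ (by linarith : (0:ℝ) < p)]
        linarith
      calc (2:ℝ) ≤ lam * (4 * (lam * p)⁻¹) := h42
        _ ≤ lam * t ^ (1/(n:ℝ)) := by
            apply mul_le_mul_of_nonneg_left hmono hlam.le
    nlinarith [mul_le_mul_of_nonneg_left key ht]
  -- now the integral estimates
  set T : ℝ := 4 ^ n * tc with hTdef
  have hTpos : 0 < T := by rw [hTdef]; positivity
  set f : ℝ → ℝ := fun t => Real.exp (t - lam * t ^ (((n:ℝ) + 1)/(n:ℝ))) with hfdef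
  have hfm : Measurable f := by fun_prop
  have hfnn : ∀ t, 0 ≤ f t := fun t => (Real.exp_pos _).le
  set C : ℝ := Real.exp (tc / ((n:ℝ) + 1)) with hCdef
  have hfleC : ∀ t ∈ Set.Ioc (0:ℝ) T, f t ≤ C := by
    intro t htmem
    rw [hfdef, hCdef]
    exact Real.exp_le_exp.2 (hmax t htmem.1.le)
  have hint1 : IntegrableOn f (Set.Ioc (0:ℝ) T) := by
    apply Integrable.mono' (g := fun _ => C)
      (integrableOn_const measure_Ioc_lt_top.ne enorm_ne_top)
      hfm.aestronglyMeasurable.restrict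
    filter_upwards [ae_restrict_mem measurableSet_Ioc] with t htmem
    rw [Real.norm_eq_abs, abs_of_nonneg (hfnn t)]
    exact hfleC t htmem
  have hint2 : IntegrableOn f (Set.Ioi T) := by
    apply Integrable.mono' (g := fun t => Real.exp (-1 * t))
      (exp_neg_integrableOn_Ioi T one_pos)
      hfm.aestronglyMeasurable.restrict
    filter_upwards [ae_restrict_mem measurableSet_Ioi] with t htmem
    rw [Real.norm_eq_abs, abs_of_nonneg (hfnn t), hfdef]
    apply Real.exp_le_exp.2
    have := htail t (le_of_lt htmem)
    simpa using this
  have hsplitI : ∫ t in Set.Ioi (0:ℝ), f t =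
      (∫ t in Set.Ioc (0:ℝ) T, f t) + ∫ t in Set.Ioi T, f t := by
    rw [← setIntegral_union (Set.Ioc_disjoint_Ioi le_rfl) measurableSet_Ioi hint1 hint2,
      Set.Ioc_union_Ioi_eq_Ioi hTpos.le]
  have hb1 : ∫ t in Set.Ioc (0:ℝ) T, f t ≤ T * C := by
    calc ∫ t in Set.Ioc (0:ℝ) T, f t ≤ ∫ _t in Set.Ioc (0:ℝ) T, C := by
          apply setIntegral_mono_on hint1
            (integrableOn_const measure_Ioc_lt_top.ne enorm_ne_top) measurableSet_Ioc hfleC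
      _ = T * C := by
          rw [setIntegral_const, measureReal_def, Real.volume_Ioc, smul_eq_mul, sub_zero,
            ENNReal.toReal_ofReal hTpos.le]
  have hb2 : ∫ t in Set.Ioi T, f t ≤ 1 := by
    have hexpint : IntegrableOn (fun t : ℝ => Real.exp (-t)) (Set.Ioi T) := by
      have := exp_neg_integrableOn_Ioi T one_pos
      simpa using this
    calc ∫ t in Set.Ioi T, f t ≤ ∫ t in Set.Ioi T, Real.exp (-t) := by
          apply setIntegral_mono_on hint2 hexpint measurableSet_Ioi
          intro t htm
          exact Real.exp_le_exp.2 (htail t htm.le)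
      _ = Real.exp (-T) := integral_exp_neg_Ioi T
      _ ≤ 1 := Real.exp_le_one_iff.2 (by linarith)
  rw [hhtc, hsplitI]
  have : T * Real.exp (tc / ((n:ℝ)+1)) = T * C := rfl
  linarith [hb1, hb2]
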